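/- arXiv:1108.3700 — 7 statements merged into one kernel-verified Lean document; each statement's English description precedes it below -/
import Mathlib

section
/- If an abstract simplicial complex Δ ⊆ 2^[n] is an initial segment complex, then Δ satisfies the cancellation conditions CC_2* and CC_3*. -/
/-- A qualitative probability order on `2^[n]`. -/
def IsQPO (n : ℕ) (r : Finset (Fin n) → Finset (Fin n) → Prop) : Prop :=
  (∀ A, r A A) ∧
  (∀ A B, r A B ∨ r B A) ∧
  (∀ A B C, r A B → r B C → r A C) ∧
  (∀ A, r ∅ A) ∧
  (∀ A B C : Finset (Fin n), (A ∪ B) ∩ C = ∅ → (r A B ↔ r (A ∪ C) (B ∪ C)))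

/-- The strict relation `A ≺ B`. -/
def strictR {n : ℕ} (r : Finset (Fin n) → Finset (Fin n) → Prop)
    (A B : Finset (Fin n)) : Prop := r A B ∧ ¬ r B A

/-- The initial segment `Δ(⪯,T) = {X ⊆ [n] : X ≺ T}`. -/
def initialSegment {n : ℕ} (r : Finset (Fin n) → Finset (Fin n) → Prop)
    (T : Finset (Fin n)) : Set (Finset (Fin n)) := {X | strictR r X T}

/-- An abstract simplicial complex on `[n]`: closed under taking subsets. -/
def IsSimplicialComplex {n : ℕ} (Δ : Set (Finset (Fin n))) : Prop :=
  ∀ A B : Finset (Fin n), B ∈ Δ → A ⊆ B → A ∈ Δ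

/-- An initial segment complex: a complex of the form `Δ(⪯,T)`. -/
def IsInitialSegmentComplex {n : ℕ} (Δ : Set (Finset (Fin n))) : Prop :=
  ∃ (r : Finset (Fin n) → Finset (Fin n) → Prop) (T : Finset (Fin n)),
    IsQPO n r ∧ Δ = initialSegment r T

/-- `(A_1,…,A_k; B_1,…,B_k)` is a trading transform. -/
def IsTradingTransform {n k : ℕ} (A B : Fin k → Finset (Fin n)) : Prop :=
  ∀ i : Fin n,
    (Finset.univ.filter (fun j => i ∈ A j)).card =
    (Finset.univ.filter (fun j => i ∈ B j)).card

/-- The `k`-th cancellation condition `CC_k*` for a family of subsets. -/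
def CCstar (n k : ℕ) (Δ : Set (Finset (Fin n))) : Prop :=
  ¬ ∃ A B : Fin k → Finset (Fin n), IsTradingTransform A B ∧
      (∀ i, A i ∈ Δ) ∧ (∀ i, B i ∉ Δ)

/-! ### Auxiliary lemmas -/

lemma qpo_strict_iff {n : ℕ} {r : Finset (Fin n) → Finset (Fin n) → Prop}
    (h : IsQPO n r) {A B C : Finset (Fin n)} (hd : (A ∪ B) ∩ C = ∅) :
    strictR r A B ↔ strictR r (A ∪ C) (B ∪ C) := by
  have h1 := h.2.2.2.2 A B C hd
  have h2 := h.2.2.2.2 B A C (by rwa [Finset.union_comm])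
  unfold strictR
  tauto

/-- Disjointifying a trading transform (replace `A i, B i` by `A i \ B i, B i \ A i`)
gives again a trading transform. -/
lemma trade_sdiff {n k : ℕ} {A B : Fin k → Finset (Fin n)} (h : IsTradingTransform A B) :
    IsTradingTransform (fun i => A i \ B i) (fun i => B i \ A i) := by
  intro x
  have hx := h x
  have key1 : (Finset.univ.filter fun j => x ∈ A j).card
      = (Finset.univ.filter fun j => x ∈ A j \ B j).card
        + (Finset.univ.filter fun j => x ∈ A j ∧ x ∈ B j).card := by
    rw [Finset.card_filter, Finset.card_filter, Finset.card_filter, ← Finset.sum_add_distrib]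
    refine Finset.sum_congr rfl fun j _ => ?_
    by_cases h1 : x ∈ A j <;> by_cases h2 : x ∈ B j <;> simp [h1, h2]
  have key2 : (Finset.univ.filter fun j => x ∈ B j).card
      = (Finset.univ.filter fun j => x ∈ B j \ A j).card
        + (Finset.univ.filter fun j => x ∈ A j ∧ x ∈ B j).card := by
    rw [Finset.card_filter, Finset.card_filter, Finset.card_filter, ← Finset.sum_add_distrib]
    refine Finset.sum_congr rfl fun j _ => ?_
    by_cases h1 : x ∈ A j <;> by_cases h2 : x ∈ B j <;> simp [h1, h2]
  simp only at key1 key2 ⊢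
  omega

/-- From `A i ≺ B i` deduce `A i \ B i ≺ B i \ A i`. -/
lemma strict_sdiff {n : ℕ} {r : Finset (Fin n) → Finset (Fin n) → Prop}
    (hq : IsQPO n r) {A B : Finset (Fin n)} (h : strictR r A B) :
    strictR r (A \ B) (B \ A) := by
  have hdisj : ((A \ B) ∪ (B \ A)) ∩ (A ∩ B) = ∅ := by
    ext x
    simp only [Finset.mem_inter, Finset.mem_union, Finset.mem_sdiff, Finset.notMem_empty,
      iff_false]
    tauto
  have h1 : (A \ B) ∪ (A ∩ B) = A := Finset.sdiff_union_inter _ _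
  have h2 : (B \ A) ∪ (A ∩ B) = B := by
    rw [Finset.inter_comm]; exact Finset.sdiff_union_inter _ _
  have := qpo_strict_iff hq hdisj
  rw [h1, h2] at this
  exact this.mpr h


set_option maxHeartbeats 800000 in
lemma bash2 (e0 e1 f0 f1 : Prop) [Decidable e0] [Decidable e1] [Decidable f0] [Decidable f1]
    (h : (if e0 then 1 else 0) + (if e1 then 1 else 0)
       = ((if f0 then 1 else 0) + (if f1 then 1 else 0) : ℕ))
    (d0 : e0 → ¬ f0) (d1 : e1 → ¬ f1) :
    (e0 ↔ f1) ∧ (e1 ↔ f0) := by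
  by_cases e0 <;> by_cases e1 <;> by_cases f0 <;> by_cases f1 <;> simp_all

set_option maxHeartbeats 1600000 in
lemma bash3 (e0 e1 e2 f0 f1 f2 : Prop) [Decidable e0] [Decidable e1] [Decidable e2]
    [Decidable f0] [Decidable f1] [Decidable f2]
    (h : (if e0 then 1 else 0) + (if e1 then 1 else 0) + (if e2 then 1 else 0)
       = ((if f0 then 1 else 0) + (if f1 then 1 else 0) + (if f2 then 1 else 0) : ℕ))
    (d0 : e0 → ¬ f0) (d1 : e1 → ¬ f1) (d2 : e2 → ¬ f2) :
    (e0 → f1 ∨ f2) ∧ (e1 → f0 ∨ f2) ∧ (e2 → f0 ∨ f1) ∧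
    (f0 → e1 ∨ e2) ∧ (f1 → e0 ∨ e2) ∧ (f2 → e0 ∨ e1) ∧
    ¬(e0 ∧ e1) ∧ ¬(e0 ∧ e2) ∧ ¬(e1 ∧ e2) ∧
    ¬(f0 ∧ f1) ∧ ¬(f0 ∧ f2) ∧ ¬(f1 ∧ f2) := by
  by_cases e0 <;> by_cases e1 <;> by_cases e2 <;> by_cases f0 <;> by_cases f1 <;> by_cases f2 <;>
    simp_all

set_option maxHeartbeats 800000 in
/-- Core of `CC₂*`: no length-2 trading transform with `a i ≺ b i` and `a i ∩ b i = ∅`. -/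
lemma cc2core {n : ℕ} {r : Finset (Fin n) → Finset (Fin n) → Prop}
    (hq : IsQPO n r) (a b : Fin 2 → Finset (Fin n))
    (htt : IsTradingTransform a b) (hd : ∀ i (x : Fin n), x ∈ a i → x ∉ b i)
    (hs : ∀ i, strictR r (a i) (b i)) : False := by
  have hx : ∀ x : Fin n, (x ∈ a 0 ↔ x ∈ b 1) ∧ (x ∈ a 1 ↔ x ∈ b 0) := by
    intro x
    have h := htt x
    have d0 := hd 0 x
    have d1 := hd 1 x
    rw [Finset.card_filter, Finset.card_filter, Fin.sum_univ_two, Fin.sum_univ_two] at h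
    exact bash2 _ _ _ _ h d0 d1
  have e : b 0 = a 1 := by
    ext x; exact (hx x).2.symm
  have e' : b 1 = a 0 := by
    ext x; exact (hx x).1.symm
  have h1 := (hs 0).2
  have h2 := (hs 1).1
  rw [e] at h1
  rw [e'] at h2
  exact h1 h2

set_option maxHeartbeats 1600000 in
/-- Core of `CC₃*`: no length-3 trading transform with `a i ≺ b i` and `a i ∩ b i = ∅`. -/
lemma cc3core {n : ℕ} {r : Finset (Fin n) → Finset (Fin n) → Prop}
    (hq : IsQPO n r) (a b : Fin 3 → Finset (Fin n))
    (htt : IsTradingTransform a b) (hd : ∀ i (x : Fin n), x ∈ a i → x ∉ b i)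
    (hs : ∀ i, strictR r (a i) (b i)) : False := by
  have hx : ∀ x : Fin n,
      (x ∈ a 0 → x ∈ b 1 ∨ x ∈ b 2) ∧
      (x ∈ a 1 → x ∈ b 0 ∨ x ∈ b 2) ∧
      (x ∈ a 2 → x ∈ b 0 ∨ x ∈ b 1) ∧
      (x ∈ b 0 → x ∈ a 1 ∨ x ∈ a 2) ∧
      (x ∈ b 1 → x ∈ a 0 ∨ x ∈ a 2) ∧
      (x ∈ b 2 → x ∈ a 0 ∨ x ∈ a 1) ∧
      ¬(x ∈ a 0 ∧ x ∈ a 1) ∧ ¬(x ∈ a 0 ∧ x ∈ a 2) ∧ ¬(x ∈ a 1 ∧ x ∈ a 2) ∧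
      ¬(x ∈ b 0 ∧ x ∈ b 1) ∧ ¬(x ∈ b 0 ∧ x ∈ b 2) ∧ ¬(x ∈ b 1 ∧ x ∈ b 2) := by
    intro x
    have h := htt x
    have d0 := hd 0 x
    have d1 := hd 1 x
    have d2 := hd 2 x
    rw [Finset.card_filter, Finset.card_filter, Fin.sum_univ_three, Fin.sum_univ_three] at h
    exact bash3 _ _ _ _ _ _ h d0 d1 d2
  -- Notation: X i j := a i ∩ b j.  Then a 0 = X02 ∪ X01, b 0 = X10 ∪ X20, etc.
  have trans := hq.2.2.1
  have D1 : ((a 0 ∪ b 0) ∩ (a 1 ∩ b 2)) = ∅ := by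
    ext x
    obtain ⟨c1, c2, c3, c4, c5, c6, c7, c8, c9, c10, c11, c12⟩ := hx x
    simp only [Finset.mem_inter, Finset.mem_union, Finset.notMem_empty, iff_false]
    rintro ⟨h1 | h1, h2, h3⟩
    · exact c7 ⟨h1, h2⟩
    · exact c11 ⟨h1, h3⟩
  have S1 : strictR r (a 0 ∪ (a 1 ∩ b 2)) (b 0 ∪ (a 1 ∩ b 2)) :=
    (qpo_strict_iff hq D1).mp (hs 0)
  have D2 : ((a 1 ∪ b 1) ∩ (a 2 ∩ b 0)) = ∅ := by
    ext x
    obtain ⟨c1, c2, c3, c4, c5, c6, c7, c8, c9, c10, c11, c12⟩ := hx x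
    simp only [Finset.mem_inter, Finset.mem_union, Finset.notMem_empty, iff_false]
    rintro ⟨h1 | h1, h2, h3⟩
    · exact c9 ⟨h1, h2⟩
    · exact c10 ⟨h3, h1⟩
  have S2 : strictR r (a 1 ∪ (a 2 ∩ b 0)) (b 1 ∪ (a 2 ∩ b 0)) :=
    (qpo_strict_iff hq D2).mp (hs 1)
  have E1 : b 0 ∪ (a 1 ∩ b 2) = a 1 ∪ (a 2 ∩ b 0) := by
    ext x
    obtain ⟨c1, c2, c3, c4, c5, c6, c7, c8, c9, c10, c11, c12⟩ := hx x
    simp only [Finset.mem_union, Finset.mem_inter]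
    constructor
    · rintro (h | ⟨h1, h2⟩)
      · rcases c4 h with h' | h'
        · exact Or.inl h'
        · exact Or.inr ⟨h', h⟩
      · exact Or.inl h1
    · rintro (h | ⟨h1, h2⟩)
      · rcases c2 h with h' | h'
        · exact Or.inl h'
        · exact Or.inr ⟨h, h'⟩
      · exact Or.inl h2
  have e1 : r (a 0 ∪ (a 1 ∩ b 2)) (a 1 ∪ (a 2 ∩ b 0)) := by
    rw [← E1]; exact S1.1
  have S3 : strictR r (a 0 ∪ (a 1 ∩ b 2)) (b 1 ∪ (a 2 ∩ b 0)) :=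
    ⟨trans _ _ _ e1 S2.1, fun hc => S2.2 (trans _ _ _ hc e1)⟩
  have E2 : a 0 ∪ (a 1 ∩ b 2) = ((a 0 ∩ b 2) ∪ (a 1 ∩ b 2)) ∪ (a 0 ∩ b 1) := by
    ext x
    obtain ⟨c1, c2, c3, c4, c5, c6, c7, c8, c9, c10, c11, c12⟩ := hx x
    simp only [Finset.mem_union, Finset.mem_inter]
    constructor
    · rintro (h | h)
      · rcases c1 h with h' | h'
        · exact Or.inr ⟨h, h'⟩
        · exact Or.inl (Or.inl ⟨h, h'⟩)
      · exact Or.inl (Or.inr h)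
    · rintro ((⟨h1, _⟩ | h) | ⟨h1, _⟩)
      · exact Or.inl h1
      · exact Or.inr h
      · exact Or.inl h1
  have E3 : b 1 ∪ (a 2 ∩ b 0) = ((a 2 ∩ b 1) ∪ (a 2 ∩ b 0)) ∪ (a 0 ∩ b 1) := by
    ext x
    obtain ⟨c1, c2, c3, c4, c5, c6, c7, c8, c9, c10, c11, c12⟩ := hx x
    simp only [Finset.mem_union, Finset.mem_inter]
    constructor
    · rintro (h | h)
      · rcases c5 h with h' | h'
        · exact Or.inr ⟨h', h⟩
        · exact Or.inl (Or.inl ⟨h', h⟩)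
      · exact Or.inl (Or.inr h)
    · rintro ((⟨_, h2⟩ | h) | ⟨_, h2⟩)
      · exact Or.inl h2
      · exact Or.inr h
      · exact Or.inl h2
  have D3 : ((((a 0 ∩ b 2) ∪ (a 1 ∩ b 2)) ∪ ((a 2 ∩ b 1) ∪ (a 2 ∩ b 0))) ∩ (a 0 ∩ b 1)) = ∅ := by
    ext x
    obtain ⟨c1, c2, c3, c4, c5, c6, c7, c8, c9, c10, c11, c12⟩ := hx x
    simp only [Finset.mem_inter, Finset.mem_union, Finset.notMem_empty, iff_false]
    rintro ⟨(⟨_, h2⟩ | ⟨h1, h2⟩) | ⟨h1, _⟩ | ⟨h1, _⟩, ha0, hb1⟩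
    · exact c12 ⟨hb1, h2⟩
    · exact c7 ⟨ha0, h1⟩
    · exact c8 ⟨ha0, h1⟩
    · exact c8 ⟨ha0, h1⟩
  have S3' : strictR r (((a 0 ∩ b 2) ∪ (a 1 ∩ b 2)) ∪ (a 0 ∩ b 1))
      (((a 2 ∩ b 1) ∪ (a 2 ∩ b 0)) ∪ (a 0 ∩ b 1)) := by
    rw [← E2, ← E3]; exact S3
  have S4 : strictR r ((a 0 ∩ b 2) ∪ (a 1 ∩ b 2)) ((a 2 ∩ b 1) ∪ (a 2 ∩ b 0)) :=
    (qpo_strict_iff hq D3).mpr S3'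
  have E4 : a 2 = (a 2 ∩ b 1) ∪ (a 2 ∩ b 0) := by
    ext x
    obtain ⟨c1, c2, c3, c4, c5, c6, c7, c8, c9, c10, c11, c12⟩ := hx x
    simp only [Finset.mem_union, Finset.mem_inter]
    constructor
    · intro h
      rcases c3 h with h' | h'
      · exact Or.inr ⟨h, h'⟩
      · exact Or.inl ⟨h, h'⟩
    · rintro (⟨h, _⟩ | ⟨h, _⟩) <;> exact h
  have E5 : b 2 = (a 0 ∩ b 2) ∪ (a 1 ∩ b 2) := by
    ext x
    obtain ⟨c1, c2, c3, c4, c5, c6, c7, c8, c9, c10, c11, c12⟩ := hx x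
    simp only [Finset.mem_union, Finset.mem_inter]
    constructor
    · intro h
      rcases c6 h with h' | h'
      · exact Or.inl ⟨h', h⟩
      · exact Or.inr ⟨h', h⟩
    · rintro (⟨_, h⟩ | ⟨_, h⟩) <;> exact h
  have S5 : strictR r ((a 2 ∩ b 1) ∪ (a 2 ∩ b 0)) ((a 0 ∩ b 2) ∪ (a 1 ∩ b 2)) := by
    rw [← E4, ← E5]; exact hs 2
  exact S4.2 S5.1

lemma cc2 {n : ℕ} {r : Finset (Fin n) → Finset (Fin n) → Prop}
    (hq : IsQPO n r) (a b : Fin 2 → Finset (Fin n))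
    (htt : IsTradingTransform a b) (hs : ∀ i, strictR r (a i) (b i)) : False := by
  refine cc2core hq (fun i => a i \ b i) (fun i => b i \ a i) (trade_sdiff htt) ?_ ?_
  · intro i x h1 h2
    simp only [Finset.mem_sdiff] at h1 h2
    tauto
  · intro i
    exact strict_sdiff hq (hs i)

lemma cc3 {n : ℕ} {r : Finset (Fin n) → Finset (Fin n) → Prop}
    (hq : IsQPO n r) (a b : Fin 3 → Finset (Fin n))
    (htt : IsTradingTransform a b) (hs : ∀ i, strictR r (a i) (b i)) : False := by
  refine cc3core hq (fun i => a i \ b i) (fun i => b i \ a i) (trade_sdiff htt) ?_ ?_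
  · intro i x h1 h2
    simp only [Finset.mem_sdiff] at h1 h2
    tauto
  · intro i
    exact strict_sdiff hq (hs i)

theorem stmt6 {n : ℕ} (Δ : Set (Finset (Fin n)))
    (hΔ : IsSimplicialComplex Δ) (hseg : IsInitialSegmentComplex Δ) :
    CCstar n 2 Δ ∧ CCstar n 3 Δ := by
  obtain ⟨r, T, hq, rfl⟩ := hseg
  have mkstrict : ∀ {k : ℕ} (A B : Fin k → Finset (Fin n)),
      (∀ i, A i ∈ initialSegment r T) → (∀ i, B i ∉ initialSegment r T) →
      ∀ i, strictR r (A i) (B i) := by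
    intro k A B hA hB i
    have h1 : strictR r (A i) T := hA i
    have h2 : r T (B i) := by
      rcases hq.2.1 (B i) T with h | h
      · by_contra hc
        exact hB i ⟨h, hc⟩
      · exact h
    exact ⟨hq.2.2.1 _ _ _ h1.1 h2, fun hc => h1.2 (hq.2.2.1 _ _ _ h2 hc)⟩
  constructor
  · rintro ⟨A, B, htt, hA, hB⟩
    exact cc2 hq A B htt (mkstrict A B hA hB)
  · rintro ⟨A, B, htt, hA, hB⟩
    exact cc3 hq A B htt (mkstrict A B hA hB)
end

section
/- Every initial segment complex is a shifted simplicial complex. -/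
/-- A shifted complex: there is a linear order `⊴` on `[n]` such that replacing an
element of a face by a `⊴`-smaller element not in the face yields a face. -/
def IsShifted {n : ℕ} (Δ : Set (Finset (Fin n))) : Prop :=
  ∃ le : Fin n → Fin n → Prop, IsLinearOrder (Fin n) le ∧
    ∀ F ∈ Δ, ∀ x ∈ F, ∀ y, le y x → y ∉ F → (F.erase x) ∪ {y} ∈ Δ

theorem stmt7 {n : ℕ} (Δ : Set (Finset (Fin n)))
    (hseg : IsInitialSegmentComplex Δ) : IsShifted Δ := by
  obtain ⟨r, T, ⟨hrefl, htot, htrans, hempty, hfin⟩, hΔ⟩ := hseg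
  refine ⟨fun y x => r {y} {x} ∧ (r {x} {y} → y ≤ x), ?_, ?_⟩
  · refine { refl := fun a => ⟨hrefl _, fun _ => le_refl a⟩,
             trans := ?_, antisymm := ?_, total := ?_ }
    · rintro a b c ⟨hab, hab'⟩ ⟨hbc, hbc'⟩
      refine ⟨htrans _ _ _ hab hbc, fun hca => ?_⟩
      have hcb : r {c} {b} := htrans _ _ _ hca hab
      have hba : r {b} {a} := htrans _ _ _ hbc hca
      exact le_trans (hab' hba) (hbc' hcb)
    · exact fun a b ⟨hab, hab'⟩ ⟨hba, hba'⟩ => le_antisymm (hab' hba) (hba' hab)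
    · intro a b
      rcases htot ({a} : Finset (Fin n)) {b} with h | h
      · by_cases h' : r ({b} : Finset (Fin n)) {a}
        · rcases le_total a b with hle | hle
          · exact Or.inl ⟨h, fun _ => hle⟩
          · exact Or.inr ⟨h', fun _ => hle⟩
        · exact Or.inl ⟨h, fun hb => absurd hb h'⟩
      · by_cases h' : r ({a} : Finset (Fin n)) {b}
        · rcases le_total a b with hle | hle
          · exact Or.inl ⟨h', fun _ => hle⟩
          · exact Or.inr ⟨h, fun _ => hle⟩
        · exact Or.inr ⟨h, fun ha => absurd ha h'⟩
  · intro F hF x hx y hyx hyF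
    rw [hΔ] at hF ⊢
    obtain ⟨hFT, hTF⟩ := hF
    have hr : r {y} {x} := hyx.1
    set G := F.erase x with hG
    have hyG : y ∉ G := fun h => hyF (Finset.mem_of_mem_erase h)
    have hdisj : (({y} : Finset (Fin n)) ∪ {x}) ∩ G = ∅ := by
      rw [Finset.eq_empty_iff_forall_notMem]
      intro a ha
      rw [Finset.mem_inter, Finset.mem_union, Finset.mem_singleton,
        Finset.mem_singleton] at ha
      obtain ⟨h1 | h1, h2⟩ := ha
      · exact hyG (h1 ▸ h2)
      · subst h1; exact Finset.notMem_erase _ F h2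
    have h1 : r ({y} ∪ G) ({x} ∪ G) := (hfin {y} {x} G hdisj).mp hr
    have hxF : ({x} : Finset (Fin n)) ∪ G = F := by
      rw [← Finset.insert_eq, hG, Finset.insert_erase hx]
    rw [hxF, Finset.union_comm] at h1
    exact ⟨htrans _ _ _ h1 hFT, fun h => hTF (htrans _ _ _ h h1)⟩
end

section
/- Let Δ be the smallest shifted simplicial complex on [7] with respect to the usual order on {1,…,7} that contains the sets {1,5,7} and {2,3,4,6}, i.e., the smallest family containing {1,5,7} and {2,3,4,6} that is closed under taking subsets and under replacing an element of a face by a smaller element not in that face. Then neither {3,4,7} nor {1,2,5,6} belongs to Δ, the sequence ({1,5,7},{2,3,4,6};{3,4,7},{1,2,5,6}) is a trading transform violating CC_2* for Δ, and consequently Δ is a shifted simplicial complex that is not an initial segment complex. -/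
/-- A complex is shifted with respect to a linear order `⊴` on the ground set. -/
def IsShiftedWrt {n : ℕ} (Δ : Set (Finset (Fin n))) (le : Fin n → Fin n → Prop) : Prop :=
  ∀ F ∈ Δ, ∀ x ∈ F, ∀ y, le y x → y ∉ F → (F.erase x) ∪ {y} ∈ Δ

/-- The smallest family of subsets of `[7]` containing the sets in `S` that is closed
under taking subsets and under replacing an element of a face by a smaller element
(in the usual order on `[7]`) not belonging to the face. -/
inductive ShiftClosure (S : Set (Finset (Fin 7))) : Finset (Fin 7) → Prop
  | base : ∀ F ∈ S, ShiftClosure S F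
  | subset : ∀ A B : Finset (Fin 7), ShiftClosure S B → A ⊆ B → ShiftClosure S A
  | shift : ∀ (F : Finset (Fin 7)) (x y : Fin 7), ShiftClosure S F → x ∈ F →
      y ≤ x → y ∉ F → ShiftClosure S ((F.erase x) ∪ {y})

/-!
Every set in the shifted complex generated by a family `S` meets each tail `{t, t+1, …}` in at
most as many elements as some member of `S` does, since both deleting elements and shifting an
element down preserve these tail counts. Comparing tails shows that `{3,4,7}` and `{1,2,5,6}` are
not faces, so the given trading transform violates `CC_2*`. On the other hand an initial segment
`{X : X ≺ T}` satisfies `CC_2*`: if `A₁ ≺ T ⪯ B₁` and `A₂ ≺ T ⪯ B₂`, cancelling common parts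
turns `A₁ ≺ B₁` into `A₁ \ B₁ ≺ B₁ \ A₁`, which for a trading transform of length two reads
`B₂ \ A₂ ≺ A₂ \ B₂`, contradicting `A₂ ≺ B₂`.
-/

open Finset

section TailDominated

variable {α : Type*} [LinearOrder α]

def TailDominated (G F : Finset α) : Prop :=
  ∀ t : α, #{g ∈ G | t ≤ g} ≤ #{f ∈ F | t ≤ f}

theorem TailDominated.refl (F : Finset α) : TailDominated F F := fun _ => le_rfl

theorem TailDominated.trans {G F E : Finset α} (hGF : TailDominated G F)
    (hFE : TailDominated F E) : TailDominated G E :=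
  fun t => (hGF t).trans (hFE t)

theorem TailDominated.subset {G G' F : Finset α} (hGF : TailDominated G F) (hG : G' ⊆ G) :
    TailDominated G' F :=
  fun t => (card_le_card (filter_subset_filter _ hG)).trans (hGF t)

theorem tailDominated_erase_union_singleton {G : Finset α} {x y : α} (hx : x ∈ G)
    (hyx : y ≤ x) : TailDominated ((G.erase x) ∪ {y}) G := by
  intro t
  by_cases hty : t ≤ y
  · have hxt : x ∈ {g ∈ G | t ≤ g} := mem_filter.2 ⟨hx, hty.trans hyx⟩
    calc #{g ∈ G.erase x ∪ {y} | t ≤ g}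
        ≤ #{g ∈ G.erase x | t ≤ g} + #{g ∈ ({y} : Finset α) | t ≤ g} := by
          rw [filter_union]; exact card_union_le _ _
      _ ≤ #({g ∈ G | t ≤ g}.erase x) + 1 := by
          rw [filter_erase]; exact Nat.add_le_add_left (card_filter_le _ _) _
      _ = #{g ∈ G | t ≤ g} := card_erase_add_one hxt
  · refine card_le_card fun g hg => ?_
    simp only [mem_filter, mem_union, mem_erase, mem_singleton] at hg ⊢
    rcases hg with ⟨⟨-, hgG⟩ | rfl, htg⟩
    · exact ⟨hgG, htg⟩
    · exact absurd htg hty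

end TailDominated

theorem ShiftClosure.exists_tailDominated {S : Set (Finset (Fin 7))} {G : Finset (Fin 7)}
    (hG : ShiftClosure S G) : ∃ F ∈ S, TailDominated G F := by
  induction hG with
  | base F hF => exact ⟨F, hF, .refl F⟩
  | subset A B _ hAB ih =>
    obtain ⟨F, hF, hBF⟩ := ih
    exact ⟨F, hF, hBF.subset hAB⟩
  | shift G x y _ hx hyx _ ih =>
    obtain ⟨F, hF, hGF⟩ := ih
    exact ⟨F, hF, (tailDominated_erase_union_singleton hx hyx).trans hGF⟩

theorem IsTradingTransform.symm {n k : ℕ} {A B : Fin k → Finset (Fin n)}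
    (h : IsTradingTransform A B) : IsTradingTransform B A :=
  fun i => (h i).symm

theorem IsTradingTransform.sdiff_eq {n : ℕ} {A B : Fin 2 → Finset (Fin n)}
    (h : IsTradingTransform A B) : A 0 \ B 0 = B 1 \ A 1 := by
  ext i
  have hi := h i
  simp only [card_filter, Fin.sum_univ_two] at hi
  simp only [mem_sdiff]
  split_ifs at hi <;> first | omega | tauto

namespace IsQPO

variable {n : ℕ} {r : Finset (Fin n) → Finset (Fin n) → Prop}

theorem strictR_union_iff (hr : IsQPO n r) {A B C : Finset (Fin n)} (h : (A ∪ B) ∩ C = ∅) :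
    strictR r (A ∪ C) (B ∪ C) ↔ strictR r A B := by
  rw [strictR, strictR, ← hr.2.2.2.2 A B C h, ← hr.2.2.2.2 B A C (by rwa [union_comm])]

theorem strictR_iff_sdiff (hr : IsQPO n r) {A B : Finset (Fin n)} :
    strictR r A B ↔ strictR r (A \ B) (B \ A) := by
  have hdisj : (A \ B ∪ B \ A) ∩ (A ∩ B) = ∅ := by
    ext; simp only [mem_inter, mem_union, mem_sdiff, notMem_empty, iff_false]; tauto
  rw [← hr.strictR_union_iff hdisj, sdiff_union_inter, inter_comm, sdiff_union_inter]

theorem strictR_of_strictR_of_not_strictR (hr : IsQPO n r) {A B T : Finset (Fin n)}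
    (hA : strictR r A T) (hB : ¬ strictR r B T) : strictR r A B := by
  have hTB : r T B := by
    rcases hr.2.1 T B with h | h
    · exact h
    · by_contra hc
      exact hB ⟨h, hc⟩
  exact ⟨hr.2.2.1 _ _ _ hA.1 hTB, fun hBA => hA.2 (hr.2.2.1 _ _ _ hTB hBA)⟩

theorem not_strictR_of_isTradingTransform (hr : IsQPO n r) {A B : Fin 2 → Finset (Fin n)}
    (hAB : IsTradingTransform A B) (h0 : strictR r (A 0) (B 0)) : ¬ strictR r (A 1) (B 1) := by
  rw [hr.strictR_iff_sdiff, hAB.sdiff_eq, hAB.symm.sdiff_eq] at h0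
  rw [hr.strictR_iff_sdiff]
  exact fun h1 => h0.2 h1.1

end IsQPO

theorem IsInitialSegmentComplex.ccstar_two {n : ℕ} {Δ : Set (Finset (Fin n))}
    (hΔ : IsInitialSegmentComplex Δ) : CCstar n 2 Δ := by
  rintro ⟨A, B, hAB, hA, hB⟩
  obtain ⟨r, T, hr, rfl⟩ := hΔ
  have hlt : ∀ i, strictR r (A i) (B i) := fun i =>
    hr.strictR_of_strictR_of_not_strictR (hA i) (hB i)
  exact hr.not_strictR_of_isTradingTransform hAB (hlt 0) (hlt 1)

/-- Here the elements `1,…,7` of `[7]` are represented by `0,…,6 : Fin 7`, so the sets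
`{1,5,7}`, `{2,3,4,6}`, `{3,4,7}`, `{1,2,5,6}` become `{0,4,6}`, `{1,2,3,5}`,
`{2,3,6}`, `{0,1,4,5}` respectively. -/
theorem stmt8 :
    ({2,3,6} : Finset (Fin 7)) ∉ {F | ShiftClosure {({0,4,6} : Finset (Fin 7)), ({1,2,3,5} : Finset (Fin 7))} F} ∧
    ({0,1,4,5} : Finset (Fin 7)) ∉ {F | ShiftClosure {({0,4,6} : Finset (Fin 7)), ({1,2,3,5} : Finset (Fin 7))} F} ∧
    (IsTradingTransform
      (![({0,4,6} : Finset (Fin 7)), ({1,2,3,5} : Finset (Fin 7))])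
      (![({2,3,6} : Finset (Fin 7)), ({0,1,4,5} : Finset (Fin 7))]) ∧
     (∀ i : Fin 2, (![({0,4,6} : Finset (Fin 7)), ({1,2,3,5} : Finset (Fin 7))]) i ∈
        {F | ShiftClosure {({0,4,6} : Finset (Fin 7)), ({1,2,3,5} : Finset (Fin 7))} F}) ∧
     (∀ i : Fin 2, (![({2,3,6} : Finset (Fin 7)), ({0,1,4,5} : Finset (Fin 7))]) i ∉
        {F | ShiftClosure {({0,4,6} : Finset (Fin 7)), ({1,2,3,5} : Finset (Fin 7))} F})) ∧
    ¬ CCstar 7 2 {F | ShiftClosure {({0,4,6} : Finset (Fin 7)), ({1,2,3,5} : Finset (Fin 7))} F} ∧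
    IsSimplicialComplex {F | ShiftClosure {({0,4,6} : Finset (Fin 7)), ({1,2,3,5} : Finset (Fin 7))} F} ∧
    IsShiftedWrt {F | ShiftClosure {({0,4,6} : Finset (Fin 7)), ({1,2,3,5} : Finset (Fin 7))} F}
      (fun a b => a ≤ b) ∧
    ¬ IsInitialSegmentComplex {F | ShiftClosure {({0,4,6} : Finset (Fin 7)), ({1,2,3,5} : Finset (Fin 7))} F} := by
  set S : Set (Finset (Fin 7)) := {{0,4,6}, {1,2,3,5}}
  have hB₁ : ¬ ShiftClosure S {2,3,6} := fun h => by
    obtain ⟨F, hF, hdom⟩ := h.exists_tailDominated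
    rcases hF with rfl | rfl
    exacts [absurd (hdom 1) (by decide), absurd (hdom 6) (by decide)]
  have hB₂ : ¬ ShiftClosure S {0,1,4,5} := fun h => by
    obtain ⟨F, hF, hdom⟩ := h.exists_tailDominated
    rcases hF with rfl | rfl
    exacts [absurd (hdom 0) (by decide), absurd (hdom 4) (by decide)]
  have htt : IsTradingTransform ![({0,4,6} : Finset (Fin 7)), {1,2,3,5}] ![{2,3,6}, {0,1,4,5}] := by
    unfold IsTradingTransform; decide
  have hA : ∀ i : Fin 2, ![({0,4,6} : Finset (Fin 7)), {1,2,3,5}] i ∈ {F | ShiftClosure S F} :=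
    Fin.forall_fin_two.2 ⟨.base _ (Or.inl rfl), .base _ (Or.inr rfl)⟩
  have hB : ∀ i : Fin 2, ![({2,3,6} : Finset (Fin 7)), {0,1,4,5}] i ∉ {F | ShiftClosure S F} :=
    Fin.forall_fin_two.2 ⟨hB₁, hB₂⟩
  have hCC : ¬ CCstar 7 2 {F | ShiftClosure S F} := fun h => h ⟨_, _, htt, hA, hB⟩
  exact ⟨hB₁, hB₂, ⟨htt, hA, hB⟩, hCC, fun A B hB hAB => .subset A B hB hAB,
    fun F hF x hx y hyx hy => .shift F x y hF hx hyx hy, fun h => hCC h.ccstar_two⟩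
end

section
/- Let ⪯ be a qualitative probability order on 2^[n], T ⊆ [n], and suppose (A_1,…,A_s; B_1,…,B_s) is a trading transform with A_i ≺ T ⪯ B_j for all i,j ∈ [s]. If for some indices i ≠ j and k ≠ l the two pairs (A_i,B_k) and (A_j,B_l) are compatible, then ⪯ fails to satisfy the cancellation condition CC_{s−1}. -/
/-- The `k`-th cancellation condition `CC_k`. -/
def CC (n k : ℕ) (r : Finset (Fin n) → Finset (Fin n) → Prop) : Prop :=
  ¬ ∃ A B : Fin k → Finset (Fin n), IsTradingTransform A B ∧
      (∀ i, r (A i) (B i)) ∧ (∃ i, strictR r (A i) (B i))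

/-- Two pairs of subsets `(A₁,B₁)` and `(A₂,B₂)` are compatible. -/
def Compatible {n : ℕ} (A₁ B₁ A₂ B₂ : Finset (Fin n)) : Prop :=
  (∀ x, x ∈ A₁ ∩ A₂ → x ∈ B₁ ∪ B₂) ∧ (∀ x, x ∈ B₁ ∩ B₂ → x ∈ A₁ ∪ A₂)

/-- The "merged" set `U` obtained from two compatible pairs. -/
def mU {n : ℕ} (A1 B1 A2 B2 : Finset (Fin n)) : Finset (Fin n) :=
  ((A1\B1) \ (B2\A2)) ∪ ((A2\B2) \ (B1\A1))

/-- The "merged" set `V` obtained from two compatible pairs. -/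
def mV {n : ℕ} (A1 B1 A2 B2 : Finset (Fin n)) : Finset (Fin n) :=
  ((B1\A1) \ (A2\B2)) ∪ ((B2\A2) \ (A1\B1))

/-- Modified family: put `U` at position `i` and `∅` at position `j`. -/
def modif {n s : ℕ} (A : Fin s → Finset (Fin n)) (i j : Fin s) (U : Finset (Fin n))
    (m : Fin s) : Finset (Fin n) :=
  if m = i then U else if m = j then ∅ else A m

section SetLemmas

variable {n : ℕ} (A1 B1 A2 B2 : Finset (Fin n))

lemma sl1 : ((A1\B1) ∪ (B1\A1)) ∩ (A1 ∩ B1) = ∅ := by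
  ext x
  simp only [Finset.mem_union, Finset.mem_sdiff, Finset.mem_inter, Finset.notMem_empty,
    iff_false]
  tauto

lemma sl3 (h : ∀ x, x ∈ A1 ∩ A2 → x ∈ B1 ∪ B2) :
    ((A1\B1) ∪ (B1\A1)) ∩ ((A2\B2)\(B1\A1)) = ∅ := by
  ext x
  have hx := h x
  simp only [Finset.mem_inter, Finset.mem_union] at hx
  simp only [Finset.mem_union, Finset.mem_sdiff, Finset.mem_inter, Finset.notMem_empty,
    iff_false]
  tauto

lemma sl3' (h : ∀ x, x ∈ A1 ∩ A2 → x ∈ B1 ∪ B2) :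
    ((B1\A1) ∪ (A1\B1)) ∩ ((A2\B2)\(B1\A1)) = ∅ := by
  ext x
  have hx := h x
  simp only [Finset.mem_inter, Finset.mem_union] at hx
  simp only [Finset.mem_union, Finset.mem_sdiff, Finset.mem_inter, Finset.notMem_empty,
    iff_false]
  tauto

lemma sl4 (h : ∀ x, x ∈ B1 ∩ B2 → x ∈ A1 ∪ A2) :
    ((A2\B2) ∪ (B2\A2)) ∩ ((B1\A1)\(A2\B2)) = ∅ := by
  ext x
  have hx := h x
  simp only [Finset.mem_inter, Finset.mem_union] at hx
  simp only [Finset.mem_union, Finset.mem_sdiff, Finset.mem_inter, Finset.notMem_empty,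
    iff_false]
  tauto

lemma sla : (A1\B1) ∪ ((A2\B2)\(B1\A1)) = mU A1 B1 A2 B2 ∪ ((A1\B1) ∩ (B2\A2)) := by
  ext x
  simp only [mU, Finset.mem_union, Finset.mem_sdiff, Finset.mem_inter]
  tauto

lemma slb : (B1\A1) ∪ ((A2\B2)\(B1\A1)) = (A2\B2) ∪ ((B1\A1)\(A2\B2)) := by
  ext x
  simp only [Finset.mem_union, Finset.mem_sdiff]
  tauto

lemma slc : (B2\A2) ∪ ((B1\A1)\(A2\B2)) = mV A1 B1 A2 B2 ∪ ((A1\B1) ∩ (B2\A2)) := by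
  ext x
  simp only [mV, Finset.mem_union, Finset.mem_sdiff, Finset.mem_inter]
  tauto

set_option maxHeartbeats 1000000 in
lemma sl6 (h1 : ∀ x, x ∈ A1 ∩ A2 → x ∈ B1 ∪ B2) (h2 : ∀ x, x ∈ B1 ∩ B2 → x ∈ A1 ∪ A2) :
    (mU A1 B1 A2 B2 ∪ mV A1 B1 A2 B2) ∩ ((A1\B1) ∩ (B2\A2)) = ∅ := by
  ext x
  have hx1 := h1 x
  have hx2 := h2 x
  simp only [Finset.mem_inter, Finset.mem_union] at hx1 hx2
  simp only [mU, mV, Finset.mem_union, Finset.mem_sdiff, Finset.mem_inter,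
    Finset.notMem_empty, iff_false]
  tauto

set_option maxHeartbeats 1000000 in
lemma sl6' (h1 : ∀ x, x ∈ A1 ∩ A2 → x ∈ B1 ∪ B2) (h2 : ∀ x, x ∈ B1 ∩ B2 → x ∈ A1 ∪ A2) :
    (mV A1 B1 A2 B2 ∪ mU A1 B1 A2 B2) ∩ ((A1\B1) ∩ (B2\A2)) = ∅ := by
  ext x
  have hx1 := h1 x
  have hx2 := h2 x
  simp only [Finset.mem_inter, Finset.mem_union] at hx1 hx2
  simp only [mU, mV, Finset.mem_union, Finset.mem_sdiff, Finset.mem_inter,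
    Finset.notMem_empty, iff_false]
  tauto

end SetLemmas

lemma key_count {n : ℕ} (A1 B1 A2 B2 : Finset (Fin n)) (hc : Compatible A1 B1 A2 B2)
    (x : Fin n) :
    (if x ∈ mU A1 B1 A2 B2 then 1 else 0) + (if x ∈ B1 then 1 else 0)
        + (if x ∈ B2 then 1 else 0)
      = (if x ∈ mV A1 B1 A2 B2 then 1 else 0) + (if x ∈ A1 then 1 else 0)
          + (if x ∈ A2 then (1:ℕ) else 0) := by
  have h1 := hc.1 x
  have h2 := hc.2 x
  simp only [Finset.mem_inter, Finset.mem_union, and_imp] at h1 h2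
  have hu : x ∈ mU A1 B1 A2 B2 ↔
      ((x ∈ A1 ∧ x ∉ B1) ∧ ¬(x ∈ B2 ∧ x ∉ A2)) ∨ ((x ∈ A2 ∧ x ∉ B2) ∧ ¬(x ∈ B1 ∧ x ∉ A1)) := by
    simp [mU, Finset.mem_union, Finset.mem_sdiff]
  have hv : x ∈ mV A1 B1 A2 B2 ↔
      ((x ∈ B1 ∧ x ∉ A1) ∧ ¬(x ∈ A2 ∧ x ∉ B2)) ∨ ((x ∈ B2 ∧ x ∉ A2) ∧ ¬(x ∈ A1 ∧ x ∉ B1)) := by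
    simp [mV, Finset.mem_union, Finset.mem_sdiff]
  simp only [hu, hv]
  by_cases hA1 : x ∈ A1 <;> by_cases hB1 : x ∈ B1 <;> by_cases hA2 : x ∈ A2 <;>
    by_cases hB2 : x ∈ B2 <;> simp_all

set_option maxHeartbeats 1000000 in
lemma merge_lemma {n : ℕ} {r : Finset (Fin n) → Finset (Fin n) → Prop} (hr : IsQPO n r)
    (A1 B1 A2 B2 : Finset (Fin n)) (h1 : strictR r A1 B1) (h2 : r A2 B2)
    (hc : Compatible A1 B1 A2 B2) :
    strictR r (mU A1 B1 A2 B2) (mV A1 B1 A2 B2) := by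
  obtain ⟨hrefl, htot, htrans, hempty, hdeF⟩ := hr
  have hiff1 := hdeF (A1\B1) (B1\A1) (A1∩B1) (sl1 A1 B1)
  have hiff1' := hdeF (B1\A1) (A1\B1) (A1∩B1) (by rw [Finset.union_comm]; exact sl1 A1 B1)
  have hu1 : (A1\B1) ∪ (A1∩B1) = A1 := Finset.sdiff_union_inter A1 B1
  have hu2 : (B1\A1) ∪ (A1∩B1) = B1 := by
    rw [Finset.inter_comm]; exact Finset.sdiff_union_inter B1 A1
  rw [hu1, hu2] at hiff1
  rw [hu1, hu2] at hiff1'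
  have f1 : strictR r (A1\B1) (B1\A1) := ⟨hiff1.mpr h1.1, fun h => h1.2 (hiff1'.mp h)⟩
  have hiff2 := hdeF (A2\B2) (B2\A2) (A2∩B2) (sl1 A2 B2)
  have hu3 : (A2\B2) ∪ (A2∩B2) = A2 := Finset.sdiff_union_inter A2 B2
  have hu4 : (B2\A2) ∪ (A2∩B2) = B2 := by
    rw [Finset.inter_comm]; exact Finset.sdiff_union_inter B2 A2
  rw [hu3, hu4] at hiff2
  have f2 : r (A2\B2) (B2\A2) := hiff2.mpr h2
  have h3 : r ((A1\B1) ∪ ((A2\B2)\(B1\A1))) ((B1\A1) ∪ ((A2\B2)\(B1\A1))) :=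
    (hdeF _ _ _ (sl3 A1 B1 A2 B2 hc.1)).mp f1.1
  have h4 : r ((A2\B2) ∪ ((B1\A1)\(A2\B2))) ((B2\A2) ∪ ((B1\A1)\(A2\B2))) :=
    (hdeF _ _ _ (sl4 A1 B1 A2 B2 hc.2)).mp f2
  have eqa := sla A1 B1 A2 B2
  have eqb := slb A1 B1 A2 B2
  have eqc := slc A1 B1 A2 B2
  rw [eqa, eqb] at h3
  rw [eqc] at h4
  have h5 : r (mU A1 B1 A2 B2 ∪ ((A1\B1) ∩ (B2\A2)))
      (mV A1 B1 A2 B2 ∪ ((A1\B1) ∩ (B2\A2))) := htrans _ _ _ h3 h4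
  have hUV : r (mU A1 B1 A2 B2) (mV A1 B1 A2 B2) :=
    (hdeF _ _ _ (sl6 A1 B1 A2 B2 hc.1 hc.2)).mpr h5
  refine ⟨hUV, fun hVU => ?_⟩
  have h5' : r (mV A1 B1 A2 B2 ∪ ((A1\B1) ∩ (B2\A2)))
      (mU A1 B1 A2 B2 ∪ ((A1\B1) ∩ (B2\A2))) :=
    (hdeF _ _ _ (sl6' A1 B1 A2 B2 hc.1 hc.2)).mp hVU
  have h7 := htrans _ _ _ h4 h5'
  rw [← eqa, ← eqb] at h7
  exact f1.2 ((hdeF _ _ _ (sl3' A1 B1 A2 B2 hc.1)).mpr h7)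

lemma card_filter_comp {s' s : ℕ} (f : Fin s' → Fin s) (hfinj : Function.Injective f)
    (j : Fin s) (hsurj : ∀ m, m ≠ j → ∃ t, f t = m)
    (P : Fin s → Prop) [DecidablePred P] (hPj : ¬ P j) :
    (Finset.univ.filter (fun t => P (f t))).card = (Finset.univ.filter P).card := by
  apply Finset.card_bij (fun t _ => f t)
  · intro a ha
    simp only [Finset.mem_filter, Finset.mem_univ, true_and] at ha ⊢
    exact ha
  · intro a _ b _ h
    exact hfinj h
  · intro m hm
    simp only [Finset.mem_filter, Finset.mem_univ, true_and] at hm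
    obtain ⟨t, ht⟩ := hsurj m (fun h => hPj (h ▸ hm))
    exact ⟨t, by simp [ht, hm], ht⟩

lemma card_filter_equiv {s : ℕ} (τ : Equiv.Perm (Fin s)) (P : Fin s → Prop) [DecidablePred P] :
    (Finset.univ.filter (fun m => P (τ m))).card = (Finset.univ.filter P).card := by
  apply Finset.card_bij (fun t _ => τ t)
  · intro a ha
    simp only [Finset.mem_filter, Finset.mem_univ, true_and] at ha ⊢
    exact ha
  · intro a _ b _ h
    exact τ.injective h
  · intro m hm
    simp only [Finset.mem_filter, Finset.mem_univ, true_and] at hm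
    exact ⟨τ.symm m, by simp [hm], by simp⟩

lemma sum_split {s : ℕ} (f : Fin s → ℕ) {i j : Fin s} (hij : j ≠ i) :
    ∑ m, f m = ∑ m ∈ (Finset.univ.erase i).erase j, f m + f j + f i := by
  have h1 := Finset.sum_erase_add Finset.univ f (Finset.mem_univ i)
  have h2 := Finset.sum_erase_add (Finset.univ.erase i) f
    (Finset.mem_erase.mpr ⟨hij, Finset.mem_univ j⟩)
  omega

set_option maxHeartbeats 1000000 in
theorem stmt11 {n s : ℕ} (r : Finset (Fin n) → Finset (Fin n) → Prop)
    (hr : IsQPO n r) (T : Finset (Fin n)) (A B : Fin s → Finset (Fin n))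
    (htt : IsTradingTransform A B)
    (hAT : ∀ i, strictR r (A i) T) (hTB : ∀ j, r T (B j))
    (i j k l : Fin s) (hij : i ≠ j) (hkl : k ≠ l)
    (hcomp : Compatible (A i) (B k) (A j) (B l)) :
    ¬ CC n (s - 1) r := by
  intro hCC
  have htrans := hr.2.2.1
  -- the merged strict pair
  have hUV : strictR r (mU (A i) (B k) (A j) (B l)) (mV (A i) (B k) (A j) (B l)) :=
    merge_lemma hr (A i) (B k) (A j) (B l)
      ⟨htrans _ _ _ (hAT i).1 (hTB k), fun h => (hAT i).2 (htrans _ _ _ (hTB k) h)⟩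
      (htrans _ _ _ (hAT j).1 (hTB l)) hcomp
  -- the permutation τ sending i ↦ k and j ↦ l
  have hσ1j : (Equiv.swap i k) j ≠ k := by
    intro h
    have hj : (Equiv.swap i k) j = (Equiv.swap i k) i := by
      rw [h, Equiv.swap_apply_left]
    exact hij ((Equiv.swap i k).injective hj).symm
  set τ : Equiv.Perm (Fin s) :=
    (Equiv.swap i k).trans (Equiv.swap ((Equiv.swap i k) j) l) with hτdef
  have hτi : τ i = k := by
    rw [hτdef]
    simp only [Equiv.trans_apply, Equiv.swap_apply_left]
    exact Equiv.swap_apply_of_ne_of_ne (Ne.symm hσ1j) hkl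
  have hτj : τ j = l := by
    rw [hτdef]
    simp only [Equiv.trans_apply, Equiv.swap_apply_left]
  -- the embedding Fin (s-1) → Fin s avoiding j
  have hs2 : 1 < s := by
    by_contra h
    push_neg at h
    have h1 := i.isLt
    have h2 := j.isLt
    exact hij (Fin.ext (by omega))
  have hs1 : s - 1 + 1 = s := by omega
  set emb : Fin (s-1) → Fin s :=
    fun t => Fin.cast hs1 ((Fin.cast hs1.symm j).succAbove t) with hembdef
  have hembinj : Function.Injective emb := fun a b h =>
    Fin.succAbove_right_injective (Fin.cast_injective hs1 h)
  have hembne : ∀ t, emb t ≠ j := by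
    intro t h
    apply Fin.succAbove_ne (Fin.cast hs1.symm j) t
    have h' := congrArg Fin.val h
    simp only [hembdef, Fin.coe_cast] at h'
    exact Fin.ext (by rw [Fin.coe_cast]; exact h')
  have hembsurj : ∀ m : Fin s, m ≠ j → ∃ t, emb t = m := by
    intro m hm
    have hne' : Fin.cast hs1.symm m ≠ Fin.cast hs1.symm j :=
      fun h => hm (Fin.cast_injective hs1.symm h)
    obtain ⟨t, ht⟩ := Fin.exists_succAbove_eq hne'
    refine ⟨t, Fin.ext ?_⟩
    have h' := congrArg Fin.val ht
    rw [Fin.coe_cast] at h'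
    simp only [hembdef, Fin.coe_cast]
    exact h'
  have hmodAi : modif A i j (mU (A i) (B k) (A j) (B l)) i = mU (A i) (B k) (A j) (B l) := by
    simp [modif]
  have hmodBk : modif B k l (mV (A i) (B k) (A j) (B l)) k = mV (A i) (B k) (A j) (B l) := by
    simp [modif]
  apply hCC
  refine ⟨fun t => modif A i j (mU (A i) (B k) (A j) (B l)) (emb t),
          fun t => modif B k l (mV (A i) (B k) (A j) (B l)) (τ (emb t)), ?_, ?_, ?_⟩
  · -- trading transform
    intro x
    show (Finset.univ.filter
        (fun t => x ∈ modif A i j (mU (A i) (B k) (A j) (B l)) (emb t))).card =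
      (Finset.univ.filter
        (fun t => x ∈ modif B k l (mV (A i) (B k) (A j) (B l)) (τ (emb t)))).card
    rw [card_filter_comp emb hembinj j hembsurj
          (fun m => x ∈ modif A i j (mU (A i) (B k) (A j) (B l)) m)
          (by intro hx; simp [modif, Ne.symm hij] at hx),
        card_filter_comp emb hembinj j hembsurj
          (fun m => x ∈ modif B k l (mV (A i) (B k) (A j) (B l)) (τ m))
          (by intro hx; simp [hτj, modif, Ne.symm hkl] at hx),
        card_filter_equiv τ (fun m => x ∈ modif B k l (mV (A i) (B k) (A j) (B l)) m)]
    rw [Finset.card_filter, Finset.card_filter]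
    have key := key_count (A i) (B k) (A j) (B l) hcomp x
    have htx := htt x
    rw [Finset.card_filter, Finset.card_filter] at htx
    have sA := sum_split (fun m => if x ∈ A m then 1 else 0) (Ne.symm hij)
    have sA2 := sum_split
      (fun m => if x ∈ modif A i j (mU (A i) (B k) (A j) (B l)) m then 1 else 0)
      (Ne.symm hij)
    have sB := sum_split (fun m => if x ∈ B m then 1 else 0) (Ne.symm hkl)
    have sB2 := sum_split
      (fun m => if x ∈ modif B k l (mV (A i) (B k) (A j) (B l)) m then 1 else 0)
      (Ne.symm hkl)
    beta_reduce at sA sA2 sB sB2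
    have cA : ∑ m ∈ (Finset.univ.erase i).erase j,
        (if x ∈ modif A i j (mU (A i) (B k) (A j) (B l)) m then 1 else 0) =
        ∑ m ∈ (Finset.univ.erase i).erase j, (if x ∈ A m then 1 else 0) :=
      Finset.sum_congr rfl (fun m hm => by
        simp only [Finset.mem_erase] at hm
        simp [modif, hm.1, hm.2.1])
    have cB : ∑ m ∈ (Finset.univ.erase k).erase l,
        (if x ∈ modif B k l (mV (A i) (B k) (A j) (B l)) m then 1 else 0) =
        ∑ m ∈ (Finset.univ.erase k).erase l, (if x ∈ B m then 1 else 0) :=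
      Finset.sum_congr rfl (fun m hm => by
        simp only [Finset.mem_erase] at hm
        simp [modif, hm.1, hm.2.1])
    have eAi : (if x ∈ modif A i j (mU (A i) (B k) (A j) (B l)) i then 1 else 0) =
        (if x ∈ mU (A i) (B k) (A j) (B l) then (1:ℕ) else 0) := by rw [hmodAi]
    have eAj : (if x ∈ modif A i j (mU (A i) (B k) (A j) (B l)) j then 1 else 0) = (0:ℕ) := by
      simp [modif, Ne.symm hij]
    have eBk : (if x ∈ modif B k l (mV (A i) (B k) (A j) (B l)) k then 1 else 0) =
        (if x ∈ mV (A i) (B k) (A j) (B l) then (1:ℕ) else 0) := by rw [hmodBk]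
    have eBl : (if x ∈ modif B k l (mV (A i) (B k) (A j) (B l)) l then 1 else 0) = (0:ℕ) := by
      simp [modif, Ne.symm hkl]
    rw [cA, eAi, eAj] at sA2
    rw [cB, eBk, eBl] at sB2
    omega
  · -- all pairs related
    intro t
    show r (modif A i j (mU (A i) (B k) (A j) (B l)) (emb t))
           (modif B k l (mV (A i) (B k) (A j) (B l)) (τ (emb t)))
    by_cases hti : emb t = i
    · rw [hti, hτi, hmodAi, hmodBk]
      exact hUV.1
    · have htj := hembne t
      have h1 : modif A i j (mU (A i) (B k) (A j) (B l)) (emb t) = A (emb t) := by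
        simp [modif, hti, htj]
      have hτk : τ (emb t) ≠ k := fun h => hti (τ.injective (by rw [h, hτi]))
      have hτl : τ (emb t) ≠ l := fun h => htj (τ.injective (by rw [h, hτj]))
      have h2 : modif B k l (mV (A i) (B k) (A j) (B l)) (τ (emb t)) = B (τ (emb t)) := by
        simp [modif, hτk, hτl]
      rw [h1, h2]
      exact htrans _ _ _ (hAT (emb t)).1 (hTB (τ (emb t)))
  · -- strict pair exists
    obtain ⟨t0, ht0⟩ := hembsurj i hij
    refine ⟨t0, ?_⟩
    show strictR r (modif A i j (mU (A i) (B k) (A j) (B l)) (emb t0))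
           (modif B k l (mV (A i) (B k) (A j) (B l)) (τ (emb t0)))
    rw [ht0, hτi, hmodAi, hmodBk]
    exact hUV
end

section
/- Let ⪯ be a qualitative probability order on 2^[n], T ⊆ [n], and suppose (A_1,…,A_4; B_1,…,B_4) is a trading transform with A_i ≺ T ⪯ B_j for all i,j ∈ [4]. Then the sets A_1,…,A_4 are pairwise distinct and the sets B_1,…,B_4 are pairwise distinct, i.e., |{A_1,…,A_4}| = |{B_1,…,B_4}| = 4. -/
/-!
Identify a set with its `ℤ`-valued indicator vector `chi`. By de Finetti's axiom, whether
`U ⪯ V` holds depends only on `chi V - chi U`; together with transitivity this gives the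
cancellation condition for trading transforms of length three (`IsQPO.cancel_three`).
It extends to length four when a set is repeated: if
`(P₀,…,P₃; Q₀,…,Q₃)` is a trading transform with `P₀ = P₁` (or `Q₀ = Q₁`), then
`(chi Q₀ - chi P₀) + (chi Q₂ - chi P₂)` has entries in `{-1, 0, 1}`, hence equals `chi V - chi U`
for some sets `U`, `V`, and two length-three cancellations give `Q₀ ⪯ P₀` from
`Pⱼ ⪯ Qⱼ` (`j = 1, 2, 3`). Under `Aᵢ ≺ T ⪯ Bⱼ`, a repetition among the `Aᵢ` or the `Bⱼ` (moved
to positions `0, 1` by a permutation) would give some `Bⱼ ⪯ Aᵢ`, i.e. `T ⪯ Aᵢ`.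
-/

def chi {α : Type*} [DecidableEq α] (S : Finset α) : α → ℤ := fun i => if i ∈ S then 1 else 0

theorem IsTradingTransform.sum_chi_eq {n k : ℕ} {A B : Fin k → Finset (Fin n)}
    (htt : IsTradingTransform A B) : ∑ j, chi (A j) = ∑ j, chi (B j) := by
  funext i
  have := htt i
  simp only [Finset.sum_apply, chi, Finset.sum_boole]
  exact_mod_cast this

theorem exists_chi_sub_chi_eq {α : Type*} [Fintype α] [DecidableEq α] {z : α → ℤ}
    (hz : ∀ i, -1 ≤ z i ∧ z i ≤ 1) : ∃ U V : Finset α, chi V - chi U = z := by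
  refine ⟨Finset.univ.filter (z · = -1), Finset.univ.filter (z · = 1), funext fun i => ?_⟩
  have := hz i
  simp only [Pi.sub_apply, chi, Finset.mem_filter, Finset.mem_univ, true_and]
  split_ifs <;> omega

theorem Equiv.Perm.exists_apply_eq_and_apply_eq {α : Type*} [DecidableEq α] {a b p q : α}
    (hab : a ≠ b) (hpq : p ≠ q) : ∃ σ : Equiv.Perm α, σ a = p ∧ σ b = q := by
  have hq : Equiv.swap a p q ≠ a := by
    rw [Ne, Equiv.swap_apply_eq_iff, Equiv.swap_apply_left]; exact hpq.symm
  refine ⟨Equiv.swap a p * Equiv.swap b (Equiv.swap a p q), ?_, ?_⟩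
  · simp [Equiv.swap_apply_of_ne_of_ne hab hq.symm]
  · simp

namespace IsQPO

variable {n : ℕ} {r : Finset (Fin n) → Finset (Fin n) → Prop}

theorem trans (hr : IsQPO n r) {A B C : Finset (Fin n)} (hAB : r A B) (hBC : r B C) : r A C :=
  hr.2.2.1 A B C hAB hBC

theorem iff_sdiff (hr : IsQPO n r) (U V : Finset (Fin n)) : r U V ↔ r (U \ V) (V \ U) := by
  have hdisj : (U \ V ∪ V \ U) ∩ (U ∩ V) = ∅ := by
    ext i; simp only [Finset.mem_inter, Finset.mem_union, Finset.mem_sdiff, Finset.notMem_empty,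
      iff_false]
    tauto
  rw [hr.2.2.2.2 _ _ _ hdisj, Finset.sdiff_union_inter, Finset.inter_comm,
    Finset.sdiff_union_inter]

theorem iff_of_chi_sub_chi_eq (hr : IsQPO n r) {U V U' V' : Finset (Fin n)}
    (h : chi V - chi U = chi V' - chi U') : r U V ↔ r U' V' := by
  have key : ∀ i, (i ∈ U ∧ i ∉ V ↔ i ∈ U' ∧ i ∉ V') ∧ (i ∈ V ∧ i ∉ U ↔ i ∈ V' ∧ i ∉ U') := by
    intro i
    have := congrFun h i
    simp only [Pi.sub_apply, chi] at this
    split_ifs at this <;> simp_all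
  rw [hr.iff_sdiff U V, hr.iff_sdiff U' V']
  have hU : U \ V = U' \ V' := by ext i; simp only [Finset.mem_sdiff]; exact (key i).1
  have hV : V \ U = V' \ U' := by ext i; simp only [Finset.mem_sdiff]; exact (key i).2
  rw [hU, hV]

theorem cancel_three (hr : IsQPO n r) {A₁ A₂ A₃ B₁ B₂ B₃ : Finset (Fin n)}
    (h : chi A₁ + chi A₂ + chi A₃ = chi B₁ + chi B₂ + chi B₃)
    (h₁ : r A₁ B₁) (h₂ : r A₂ B₂) : r B₃ A₃ := by
  have h₁' := (hr.iff_sdiff _ _).1 h₁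
  have h₂' := (hr.iff_sdiff _ _).1 h₂
  -- `h` makes `U₁, U₂` and `V₁, V₂` disjoint, so the chain through `V₁ ∪ U₂` adds the differences.
  set U₁ := A₁ \ B₁; set V₁ := B₁ \ A₁; set U₂ := A₂ \ B₂; set V₂ := B₂ \ A₂
  have hX : r (U₁ ∪ (U₂ \ V₁)) (V₁ ∪ U₂) := (hr.iff_of_chi_sub_chi_eq ?_).1 h₁'
  have hY : r (V₁ ∪ U₂) (V₂ ∪ (V₁ \ U₂)) := (hr.iff_of_chi_sub_chi_eq ?_).1 h₂'
  refine (hr.iff_of_chi_sub_chi_eq ?_).1 (hr.trans hX hY)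
  all_goals
    funext i
    have := congrFun h i
    simp only [U₁, V₁, U₂, V₂, chi, Pi.add_apply, Pi.sub_apply, Finset.mem_union,
      Finset.mem_sdiff] at this ⊢
    by_cases i ∈ A₁ <;> by_cases i ∈ B₁ <;> by_cases i ∈ A₂ <;> by_cases i ∈ B₂ <;>
      by_cases i ∈ A₃ <;> by_cases i ∈ B₃ <;> simp_all

theorem le_of_sum_chi_eq_four (hr : IsQPO n r) {P Q : Fin 4 → Finset (Fin n)}
    (hsum : ∑ j, chi (P j) = ∑ j, chi (Q j)) (hrep : P 0 = P 1 ∨ Q 0 = Q 1)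
    (h₁ : r (P 1) (Q 1)) (h₂ : r (P 2) (Q 2)) (h₃ : r (P 3) (Q 3)) : r (Q 0) (P 0) := by
  rw [Fin.sum_univ_four, Fin.sum_univ_four] at hsum
  obtain ⟨U, V, hUV⟩ :
      ∃ U V, chi V - chi U = chi (Q 0) - chi (P 0) + (chi (Q 2) - chi (P 2)) := by
    -- By `hsum` this vector is also `-((chi Q₁ - chi P₁) + (chi Q₃ - chi P₃))`; the repeated set
    -- rules out the entries `±2`.
    refine exists_chi_sub_chi_eq fun i => ?_
    have := congrFun hsum i
    simp only [chi, Pi.add_apply, Pi.sub_apply] at this ⊢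
    rcases hrep with h | h <;> simp only [h] at this ⊢ <;> split_ifs at this ⊢ <;> omega
  have hVU : r V U := hr.cancel_three (by linear_combination hsum - hUV) h₁ h₃
  exact hr.cancel_three (by linear_combination hUV) hVU h₂

end IsQPO

theorem stmt12 {n : ℕ} (r : Finset (Fin n) → Finset (Fin n) → Prop)
    (hr : IsQPO n r) (T : Finset (Fin n)) (A B : Fin 4 → Finset (Fin n))
    (htt : IsTradingTransform A B)
    (hAT : ∀ i, strictR r (A i) T) (hTB : ∀ j, r T (B j)) :
    Function.Injective A ∧ Function.Injective B := by
  have hsum := htt.sum_chi_eq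
  have hAB : ∀ i j, r (A i) (B j) := fun i j => hr.trans (hAT i).1 (hTB j)
  have hBA : ∀ i j, ¬ r (B j) (A i) := fun i j h => (hAT i).2 (hr.trans (hTB j) h)
  refine ⟨fun p q hpq => ?_, fun p q hpq => ?_⟩ <;> by_contra hne <;>
    obtain ⟨σ, rfl, rfl⟩ := Equiv.Perm.exists_apply_eq_and_apply_eq zero_ne_one hne
  · refine hBA (σ 0) 0 (hr.le_of_sum_chi_eq_four (P := fun j => A (σ j)) (Q := B) ?_
      (.inl hpq) (hAB _ _) (hAB _ _) (hAB _ _))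
    rw [Equiv.sum_comp σ (fun j => chi (A j)), hsum]
  · refine hBA 0 (σ 0) (hr.le_of_sum_chi_eq_four (P := A) (Q := fun j => B (σ j)) ?_
      (.inr hpq) (hAB _ _) (hAB _ _) (hAB _ _))
    rw [Equiv.sum_comp σ (fun j => chi (B j)), hsum]
end

section
/- Let ⪯ be a non-representable but almost representable qualitative probability order on 2^[n] that almost agrees with a probability measure p. Suppose the cancellation condition CC_m is violated by nonzero vectors x_1,…,x_m ∈ C(⪯), i.e., x_1 + ⋯ + x_m = 0 and −x_i ∉ C(⪯) for at least one i ∈ [m]. Then every x_j (j ∈ [m]) lies in the hyperplane H_p = {x ∈ ℝ^n : (p,x) = 0}. -/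
/-- Representability of a qualitative probability order. -/
def Representable (n : ℕ) (r : Finset (Fin n) → Finset (Fin n) → Prop) : Prop :=
  ∃ p : Fin n → ℝ, (∀ i, 0 ≤ p i) ∧ (∑ i, p i = 1) ∧
    ∀ A B : Finset (Fin n), r A B ↔ (∑ i ∈ A, p i) ≤ ∑ i ∈ B, p i

/-- Characteristic vector of a subset of `[n]`, as a vector in `ℤ^n`. -/
def chiV {n : ℕ} (A : Finset (Fin n)) : Fin n → ℤ := fun i => if i ∈ A then 1 else 0

/-- The discrete cone `C(⪯) = {χ(A) − χ(B) : B ⪯ A}`. -/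
def cone {n : ℕ} (r : Finset (Fin n) → Finset (Fin n) → Prop) : Set (Fin n → ℤ) :=
  {x | ∃ A B : Finset (Fin n), r B A ∧ x = chiV A - chiV B}

/-! Since `⪯` almost agrees with `p`, the functional `y ↦ (p, y)` is nonnegative on the cone `C(⪯)`;
the values `(p, x_j)` are therefore nonnegative reals with sum `(p, ∑ x_j) = 0`, so each vanishes. -/

theorem sum_mul_chiV_sub_chiV {n : ℕ} {R : Type*} [CommRing R] (p : Fin n → R)
    (A B : Finset (Fin n)) :
    ∑ i, p i * (((chiV A - chiV B) i : ℤ) : R) = ∑ i ∈ A, p i - ∑ i ∈ B, p i := by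
  simp only [Pi.sub_apply, chiV, Int.cast_sub, Int.cast_ite, Int.cast_one, Int.cast_zero,
    mul_sub, Finset.sum_sub_distrib, mul_ite, mul_one, mul_zero, Finset.sum_ite_mem,
    Finset.univ_inter]

theorem sum_mul_nonneg_of_mem_cone {n : ℕ} {r : Finset (Fin n) → Finset (Fin n) → Prop}
    {p : Fin n → ℝ} (halmost : ∀ A B : Finset (Fin n), r A B → (∑ i ∈ A, p i) ≤ ∑ i ∈ B, p i)
    {y : Fin n → ℤ} (hy : y ∈ cone r) :
    0 ≤ ∑ i, p i * (y i : ℝ) := by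
  obtain ⟨A, B, hBA, rfl⟩ := hy
  rw [sum_mul_chiV_sub_chiV, sub_nonneg]
  exact halmost B A hBA

theorem sum_sum_mul_eq_zero_of_sum_eq_zero {α ι : Type*} [Fintype α] [Fintype ι]
    (p : α → ℝ) (x : ι → α → ℤ) (hsum : ∑ j, x j = 0) :
    ∑ j, ∑ i, p i * (x j i : ℝ) = 0 := by
  rw [Finset.sum_comm]
  refine Finset.sum_eq_zero fun i _ => ?_
  rw [← Finset.mul_sum, ← Int.cast_sum, ← Finset.sum_apply, hsum]
  simp

theorem stmt14_general {n m : ℕ} (r : Finset (Fin n) → Finset (Fin n) → Prop)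
    (p : Fin n → ℝ)
    (halmost : ∀ A B : Finset (Fin n), r A B → (∑ i ∈ A, p i) ≤ ∑ i ∈ B, p i)
    (x : Fin m → (Fin n → ℤ))
    (hx : ∀ i, x i ∈ cone r ∧ x i ≠ 0)
    (hsum : ∑ i, x i = 0) :
    ∀ j : Fin m, ∑ i : Fin n, p i * ((x j) i : ℝ) = 0 := by
  have hnonneg : ∀ j ∈ Finset.univ, 0 ≤ ∑ i : Fin n, p i * ((x j) i : ℝ) :=
    fun j _ => sum_mul_nonneg_of_mem_cone halmost (hx j).1
  intro j
  exact (Finset.sum_eq_zero_iff_of_nonneg hnonneg).1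
    (sum_sum_mul_eq_zero_of_sum_eq_zero p x hsum) j (Finset.mem_univ j)

theorem stmt14 {n m : ℕ} (r : Finset (Fin n) → Finset (Fin n) → Prop)
    (hr : IsQPO n r) (hnrep : ¬ Representable n r)
    (p : Fin n → ℝ) (hp0 : ∀ i, 0 ≤ p i) (hp1 : ∑ i, p i = 1)
    (halmost : ∀ A B : Finset (Fin n), r A B → (∑ i ∈ A, p i) ≤ ∑ i ∈ B, p i)
    (x : Fin m → (Fin n → ℤ))
    (hx : ∀ i, x i ∈ cone r ∧ x i ≠ 0)
    (hsum : ∑ i, x i = 0)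
    (hviol : ∃ i, -(x i) ∉ cone r) :
    ∀ j : Fin m, ∑ i : Fin n, p i * ((x j) i : ℝ) = 0 :=
  stmt14_general r p halmost x hx hsum
end

section
/- Let ⪯ be a qualitative probability order on 2^[n] and T ⊆ [n]. Then the initial segment Δ(⪯,T) = {X ⊆ [n] : X ≺ T} is strongly acyclic, i.e., its Winder existential ordering ≺_W has no cycles A_1 ≺_W A_2 ≺_W ⋯ ≺_W A_k ≺_W A_1 of any length k. -/
/-- The Winder desirability relation `A ≤_W B` for a family `Δ`. -/
def WinderLE {n : ℕ} (Δ : Set (Finset (Fin n))) (A B : Finset (Fin n)) : Prop :=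
  ∀ Z : Finset (Fin n), Z ∩ ((A \ B) ∪ (B \ A)) = ∅ →
    ((A \ B) ∪ Z ∉ Δ → (B \ A) ∪ Z ∉ Δ)

/-- The Winder existential ordering `A ≺_W B`. -/
def WinderLT {n : ℕ} (Δ : Set (Finset (Fin n))) (A B : Finset (Fin n)) : Prop :=
  ¬ WinderLE Δ B A

/-- `Δ` is strongly acyclic: no cycles `A_1 ≺_W ⋯ ≺_W A_k ≺_W A_1` of any length. -/
def StronglyAcyclic {n : ℕ} (Δ : Set (Finset (Fin n))) : Prop :=
  ¬ ∃ (k : ℕ) (A : Fin (k + 1) → Finset (Fin n)),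
      ∀ i : Fin (k + 1), WinderLT Δ (A i) (A (i + 1))

/-
By de Finetti's axiom, `A ⪯ B` iff `A ∖ B ⪯ B ∖ A`, and adding a set `Z` disjoint from both
differences preserves this. Hence if `A ⪯ B` and `(A ∖ B) ∪ Z` is not below `T`, neither is
`(B ∖ A) ∪ Z`, i.e. `A ≤_W B` for `Δ(⪯,T)`. By completeness, `A ≺_W B` thus forces `A ≺ B`,
so a Winder cycle would be a cycle of the strict order `≺`, which is impossible.
-/

open Fin.NatCast in
theorem Fin.not_forall_rel_add_one_of_trans_irrefl {α : Type*} {s : α → α → Prop}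
    (htrans : ∀ a b c, s a b → s b c → s a c) (hirr : ∀ a, ¬ s a a) (k : ℕ)
    (A : Fin (k + 1) → α) :
    ¬ ∀ i, s (A i) (A (i + 1)) := by
  intro h
  have hchain : ∀ m : ℕ, s (A 0) (A (m + 1 : ℕ)) := by
    intro m
    induction m with
    | zero => simpa using h 0
    | succ m ih =>
      exact htrans _ _ _ ih (by simpa [add_assoc, one_add_one_eq_two] using h (m + 1 : ℕ))
  exact hirr (A 0) (by simpa using hchain k)

namespace IsQPO

variable {n : ℕ} {r : Finset (Fin n) → Finset (Fin n) → Prop}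

theorem strictR_of_le_of_strictR (hr : IsQPO n r) {A B C : Finset (Fin n)} (hAB : r A B)
    (hBC : strictR r B C) : strictR r A C :=
  ⟨hr.2.2.1 _ _ _ hAB hBC.1, fun hCA => hBC.2 (hr.2.2.1 _ _ _ hCA hAB)⟩

theorem strictR_trans (hr : IsQPO n r) {A B C : Finset (Fin n)} (hAB : strictR r A B)
    (hBC : strictR r B C) : strictR r A C :=
  hr.strictR_of_le_of_strictR hAB.1 hBC

theorem le_iff_sdiff_le_sdiff (hr : IsQPO n r) (A B : Finset (Fin n)) :
    r A B ↔ r (A \ B) (B \ A) := by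
  have hdisj : ((A \ B) ∪ (B \ A)) ∩ (A ∩ B) = ∅ := by
    ext x
    simp only [Finset.mem_inter, Finset.mem_union, Finset.mem_sdiff, Finset.notMem_empty,
      iff_false]
    tauto
  have := hr.2.2.2.2 (A \ B) (B \ A) (A ∩ B) hdisj
  rwa [Finset.sdiff_union_inter, Finset.inter_comm A B, Finset.sdiff_union_inter, iff_comm]
    at this

theorem winderLE_initialSegment (hr : IsQPO n r) (T : Finset (Fin n)) {A B : Finset (Fin n)}
    (hAB : r A B) : WinderLE (initialSegment r T) A B := by
  intro Z hZ hAZ hBZ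
  have hle : r ((A \ B) ∪ Z) ((B \ A) ∪ Z) :=
    (hr.2.2.2.2 _ _ Z (by rwa [Finset.inter_comm])).mp ((hr.le_iff_sdiff_le_sdiff A B).mp hAB)
  exact hAZ (hr.strictR_of_le_of_strictR hle hBZ)

theorem strictR_of_winderLT (hr : IsQPO n r) (T : Finset (Fin n)) {A B : Finset (Fin n)}
    (hAB : WinderLT (initialSegment r T) A B) : strictR r A B :=
  have hBA : ¬ r B A := fun hBA => hAB (hr.winderLE_initialSegment T hBA)
  ⟨(hr.2.1 A B).resolve_right hBA, hBA⟩

end IsQPO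

theorem stmt17 {n : ℕ} (r : Finset (Fin n) → Finset (Fin n) → Prop)
    (hr : IsQPO n r) (T : Finset (Fin n)) :
    StronglyAcyclic (initialSegment r T) := by
  rintro ⟨k, A, hA⟩
  exact Fin.not_forall_rel_add_one_of_trans_irrefl (s := strictR r)
    (fun _ _ _ => hr.strictR_trans) (fun _ h => h.2 h.1) k A fun i => hr.strictR_of_winderLT T (hA i)
end
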